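/- Let a, b > 0 and λ ∈ ℝ. If X ∼ BSN(λ, 1, b), then Y = (Φ(X; λ))^{1/a} has the Kumaraswamy distribution with parameters a and b: the law of Y has density y ↦ a b y^{a−1} (1 − y^a)^{b−1} on (0, 1). -/

import Mathlib

/-! With `F = Φ(·; λ)`, the law `BSN(λ, 1, b)` has density `b (1 - F)^{b-1} F'`, and
`Y = F^{1/a}` is a strictly increasing differentiable bijection of `ℝ` onto `(0, 1)`. The
Kumaraswamy density at `Y x` times `Y' x` is exactly that density, so the one-dimensional change
of variables formula identifies the law of `Y`. That `F` is onto `(0, 1)` rests on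
`∫ 2 φ(x) Φ(λx) dx = 1`, which follows by pairing `x` with `-x`, since
`Φ(λx) + Φ(-λx) = 1`. -/

open MeasureTheory

/-- Standard normal density. -/
noncomputable def normPdf (x : ℝ) : ℝ := Real.exp (-x ^ 2 / 2) / Real.sqrt (2 * Real.pi)

/-- Standard normal cdf. -/
noncomputable def normCdf (x : ℝ) : ℝ := ∫ t in Set.Iic x, normPdf t

/-- Skew-normal cdf with parameter `l`. -/
noncomputable def snCdf (l z : ℝ) : ℝ := ∫ t in Set.Iic z, 2 * normPdf t * normCdf (l * t)

/-- The skew-normal measure `SN(l)`: density `x ↦ 2 φ(x) Φ(l x)`. -/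
noncomputable def snMeasure (l : ℝ) : Measure ℝ :=
  volume.withDensity fun x => ENNReal.ofReal (2 * normPdf x * normCdf (l * x))

/-- The Beta function. -/
noncomputable def betaFn (a b : ℝ) : ℝ := Real.Gamma a * Real.Gamma b / Real.Gamma (a + b)

/-- The Beta skew-normal density with parameters `l`, `a`, `b`. -/
noncomputable def bsnPdf (l a b x : ℝ) : ℝ :=
  (2 / betaFn a b) * snCdf l x ^ (a - 1) * (1 - snCdf l x) ^ (b - 1) * normPdf x *
    normCdf (l * x)

/-- The Beta skew-normal measure `BSN(l, a, b)`. -/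
noncomputable def bsnMeasure (l a b : ℝ) : Measure ℝ :=
  volume.withDensity fun x => ENNReal.ofReal (bsnPdf l a b x)

open Set Filter Topology ProbabilityTheory

section IntegralIic

variable {g : ℝ → ℝ}

theorem hasDerivAt_integral_Iic (hg : Continuous g) (hgi : Integrable g) (x : ℝ) :
    HasDerivAt (fun x => ∫ t in Iic x, g t) (g x) x := by
  have hsplit : (fun x => ∫ t in Iic x, g t)
      = fun x => (∫ t in (0 : ℝ)..x, g t) + ∫ t in Iic 0, g t := by
    ext x
    rw [← intervalIntegral.integral_Iic_sub_Iic hgi.integrableOn hgi.integrableOn]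
    ring
  rw [hsplit]
  exact (intervalIntegral.integral_hasDerivAt_right hgi.intervalIntegrable
    hg.stronglyMeasurable.stronglyMeasurableAtFilter hg.continuousAt).add_const _

theorem strictMono_integral_Iic (hg : Continuous g) (hgi : Integrable g) (hpos : ∀ x, 0 < g x) :
    StrictMono fun x => ∫ t in Iic x, g t :=
  strictMono_of_hasDerivAt_pos (hasDerivAt_integral_Iic hg hgi) hpos

theorem integral_Iic_pos (hg : Continuous g) (hgi : Integrable g) (hpos : ∀ x, 0 < g x)
    (x : ℝ) : 0 < ∫ t in Iic x, g t :=
  calc 0 ≤ ∫ t in Iic (x - 1), g t :=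
        setIntegral_nonneg measurableSet_Iic fun t _ => (hpos t).le
    _ < ∫ t in Iic x, g t := strictMono_integral_Iic hg hgi hpos (by linarith)

end IntegralIic

theorem StrictMono.range_eq_Ioo_of_tendsto {α β : Type*} [LinearOrder α] [TopologicalSpace α]
    [PreconnectedSpace α] [Nonempty α] [NoMinOrder α] [NoMaxOrder α] [LinearOrder β]
    [TopologicalSpace β] [OrderClosedTopology β] {f : α → β} {a b : β} (hf : StrictMono f)
    (hcont : Continuous f) (hbot : Tendsto f atBot (𝓝 a)) (htop : Tendsto f atTop (𝓝 b)) :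
    range f = Ioo a b := by
  ext y
  constructor
  · rintro ⟨x, rfl⟩
    obtain ⟨x₁, hx₁⟩ := exists_lt x
    obtain ⟨x₂, hx₂⟩ := exists_gt x
    exact ⟨(hf.monotone.le_of_tendsto hbot x₁).trans_lt (hf hx₁),
      (hf hx₂).trans_le (hf.monotone.ge_of_tendsto htop x₂)⟩
  · rintro ⟨hay, hyb⟩
    obtain ⟨x₁, hx₁⟩ := (hbot.eventually_lt_const hay).exists
    obtain ⟨x₂, hx₂⟩ := (htop.eventually_const_lt hyb).exists
    exact mem_range_of_exists_le_of_exists_ge hcont ⟨x₁, hx₁.le⟩ ⟨x₂, hx₂.le⟩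

theorem map_withDensity_eq_withDensity_indicator {f f' : ℝ → ℝ} {ρ g : ℝ → ENNReal}
    {S : Set ℝ} (hS : MeasurableSet S) (hrange : range f = S)
    (hf' : ∀ x, HasDerivAt f (f' x) x) (hf : Function.Injective f)
    (hρ : ∀ x, ρ x = ENNReal.ofReal |f' x| * g (f x)) :
    (volume.withDensity ρ).map f = volume.withDensity (S.indicator g) := by
  have hmeas : Measurable f :=
    (continuous_iff_continuousAt.2 fun x => (hf' x).continuousAt).measurable
  ext A hA
  rw [Measure.map_apply hmeas hA, withDensity_apply _ (hmeas hA), withDensity_apply _ hA,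
    setLIntegral_indicator hS, inter_comm, ← hrange, ← image_preimage_eq_inter_range,
    lintegral_image_eq_lintegral_abs_deriv_mul (hmeas hA) (fun x _ => (hf' x).hasDerivWithinAt)
      hf.injOn]
  simp_rw [hρ]

lemma normPdf_eq_gaussianPDFReal : normPdf = gaussianPDFReal 0 1 := by
  ext x
  simp [normPdf, gaussianPDFReal_def, div_eq_inv_mul]

lemma normPdf_pos (x : ℝ) : 0 < normPdf x :=
  normPdf_eq_gaussianPDFReal ▸ gaussianPDFReal_pos 0 1 x one_ne_zero

lemma normPdf_neg (x : ℝ) : normPdf (-x) = normPdf x := by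
  simp [normPdf]

lemma continuous_normPdf : Continuous normPdf := by
  unfold normPdf
  fun_prop

lemma integrable_normPdf : Integrable normPdf :=
  normPdf_eq_gaussianPDFReal ▸ integrable_gaussianPDFReal 0 1

lemma integral_normPdf : ∫ x, normPdf x = 1 :=
  normPdf_eq_gaussianPDFReal ▸ integral_gaussianPDFReal_eq_one 0 one_ne_zero

lemma hasDerivAt_normCdf (x : ℝ) : HasDerivAt normCdf (normPdf x) x :=
  hasDerivAt_integral_Iic continuous_normPdf integrable_normPdf x

lemma continuous_normCdf : Continuous normCdf :=
  continuous_iff_continuousAt.2 fun x => (hasDerivAt_normCdf x).continuousAt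

lemma normCdf_pos (x : ℝ) : 0 < normCdf x :=
  integral_Iic_pos continuous_normPdf integrable_normPdf normPdf_pos x

lemma normCdf_le_one (x : ℝ) : normCdf x ≤ 1 :=
  integral_normPdf ▸ setIntegral_le_integral integrable_normPdf
    (Eventually.of_forall fun t => (normPdf_pos t).le)

lemma normCdf_neg (x : ℝ) : normCdf (-x) = 1 - normCdf x := by
  have hreflect : normCdf (-x) = ∫ t in Ioi x, normPdf t := by
    rw [normCdf, ← neg_neg x, ← integral_comp_neg_Ioi, neg_neg]
    simp_rw [normPdf_neg]
  have hsplit := intervalIntegral.integral_Iic_add_Ioi (b := x) integrable_normPdf.integrableOn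
    integrable_normPdf.integrableOn
  rw [integral_normPdf] at hsplit
  rw [hreflect, ← hsplit, normCdf]
  ring

noncomputable def snPdf (l x : ℝ) : ℝ := 2 * normPdf x * normCdf (l * x)

lemma snPdf_pos (l x : ℝ) : 0 < snPdf l x := by
  have := normPdf_pos x
  have := normCdf_pos (l * x)
  unfold snPdf
  positivity

lemma continuous_snPdf (l : ℝ) : Continuous (snPdf l) := by
  unfold snPdf
  have := continuous_normPdf
  have := continuous_normCdf
  fun_prop

lemma integrable_snPdf (l : ℝ) : Integrable (snPdf l) := by
  refine (integrable_normPdf.const_mul 2).mono' (continuous_snPdf l).aestronglyMeasurable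
    (Eventually.of_forall fun x => ?_)
  rw [Real.norm_eq_abs, abs_of_pos (snPdf_pos l x), snPdf]
  have := normPdf_pos x
  have := normCdf_le_one (l * x)
  nlinarith

lemma snPdf_add_snPdf_neg (l x : ℝ) : snPdf l x + snPdf l (-x) = 2 * normPdf x := by
  rw [snPdf, snPdf, normPdf_neg, mul_neg, normCdf_neg]
  ring

lemma integral_snPdf (l : ℝ) : ∫ x, snPdf l x = 1 := by
  have hsum : ∫ x, (snPdf l x + snPdf l (-x)) = 2 := by
    simp_rw [snPdf_add_snPdf_neg]
    rw [integral_const_mul, integral_normPdf, mul_one]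
  rw [integral_add (integrable_snPdf l) (integrable_snPdf l).comp_neg,
    integral_neg_eq_self (snPdf l)] at hsum
  linarith

instance isProbabilityMeasure_snMeasure (l : ℝ) : IsProbabilityMeasure (snMeasure l) := by
  constructor
  rw [snMeasure, withDensity_apply _ MeasurableSet.univ, Measure.restrict_univ]
  change ∫⁻ x, ENNReal.ofReal (snPdf l x) = 1
  rw [← ofReal_integral_eq_lintegral_ofReal (integrable_snPdf l)
    (Eventually.of_forall fun x => (snPdf_pos l x).le)]
  exact (congrArg ENNReal.ofReal (integral_snPdf l)).trans ENNReal.ofReal_one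

lemma snCdf_eq_cdf_snMeasure (l : ℝ) : snCdf l = cdf (snMeasure l) := by
  ext x
  rw [cdf_eq_real, measureReal_def, snMeasure, withDensity_apply _ measurableSet_Iic]
  change _ = (∫⁻ t in Iic x, ENNReal.ofReal (snPdf l t)).toReal
  rw [← ofReal_integral_eq_lintegral_ofReal (integrable_snPdf l).integrableOn
      (Eventually.of_forall fun t => (snPdf_pos l t).le),
    ENNReal.toReal_ofReal (setIntegral_nonneg measurableSet_Iic fun t _ => (snPdf_pos l t).le)]
  rfl

lemma hasDerivAt_snCdf (l x : ℝ) : HasDerivAt (snCdf l) (snPdf l x) x :=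
  hasDerivAt_integral_Iic (continuous_snPdf l) (integrable_snPdf l) x

lemma strictMono_snCdf (l : ℝ) : StrictMono (snCdf l) :=
  strictMono_integral_Iic (continuous_snPdf l) (integrable_snPdf l) (snPdf_pos l)

lemma continuous_snCdf (l : ℝ) : Continuous (snCdf l) :=
  continuous_iff_continuousAt.2 fun x => (hasDerivAt_snCdf l x).continuousAt

lemma tendsto_snCdf_atBot (l : ℝ) : Tendsto (snCdf l) atBot (𝓝 0) :=
  snCdf_eq_cdf_snMeasure l ▸ tendsto_cdf_atBot _

lemma tendsto_snCdf_atTop (l : ℝ) : Tendsto (snCdf l) atTop (𝓝 1) :=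
  snCdf_eq_cdf_snMeasure l ▸ tendsto_cdf_atTop _

lemma range_snCdf (l : ℝ) : range (snCdf l) = Ioo 0 1 :=
  (strictMono_snCdf l).range_eq_Ioo_of_tendsto (continuous_snCdf l) (tendsto_snCdf_atBot l)
    (tendsto_snCdf_atTop l)

lemma snCdf_pos (l x : ℝ) : 0 < snCdf l x :=
  (range_snCdf l ▸ mem_range_self x : snCdf l x ∈ Ioo 0 1).1

lemma betaFn_one_left {b : ℝ} (hb : 0 < b) : betaFn 1 b = 1 / b := by
  have := (Real.Gamma_pos_of_pos hb).ne'
  rw [betaFn, Real.Gamma_one, add_comm, Real.Gamma_add_one hb.ne']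
  field_simp

lemma bsnPdf_one_left {b : ℝ} (hb : 0 < b) (l x : ℝ) :
    bsnPdf l 1 b x = b * (1 - snCdf l x) ^ (b - 1) * snPdf l x := by
  rw [bsnPdf, snPdf, betaFn_one_left hb, sub_self, Real.rpow_zero]
  field_simp

noncomputable def kumPdf (a b y : ℝ) : ℝ := a * b * y ^ (a - 1) * (1 - y ^ a) ^ (b - 1)

lemma kumPdf_rpow_one_div_mul {a u : ℝ} (ha : a ≠ 0) (hu : 0 < u) (b : ℝ) :
    kumPdf a b (u ^ (1 / a)) * (1 / a * u ^ (1 / a - 1)) = b * (1 - u) ^ (b - 1) := by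
  have hexp : u ^ (1 / a * (a - 1)) * u ^ (1 / a - 1) = 1 := by
    rw [← Real.rpow_add hu, show 1 / a * (a - 1) + (1 / a - 1) = 0 by field_simp; ring,
      Real.rpow_zero]
  rw [kumPdf, ← Real.rpow_mul hu.le, ← Real.rpow_mul hu.le, one_div_mul_cancel ha,
    Real.rpow_one]
  calc _ = a * (1 / a) * b * (u ^ (1 / a * (a - 1)) * u ^ (1 / a - 1)) * (1 - u) ^ (b - 1) := by
        ring
    _ = b * (1 - u) ^ (b - 1) := by rw [mul_one_div_cancel ha, hexp]; ring

lemma bsnPdf_one_left_eq_mul_kumPdf {a b : ℝ} (ha : a ≠ 0) (hb : 0 < b) (l x : ℝ) :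
    bsnPdf l 1 b x =
      snPdf l x * (1 / a) * snCdf l x ^ (1 / a - 1) * kumPdf a b (snCdf l x ^ (1 / a)) := by
  rw [bsnPdf_one_left hb, ← kumPdf_rpow_one_div_mul ha (snCdf_pos l x)]
  ring

lemma hasDerivAt_snCdf_rpow (a l x : ℝ) :
    HasDerivAt (fun x => snCdf l x ^ (1 / a)) (snPdf l x * (1 / a) * snCdf l x ^ (1 / a - 1)) x :=
  (hasDerivAt_snCdf l x).rpow_const (Or.inl (snCdf_pos l x).ne')

lemma strictMono_snCdf_rpow {a : ℝ} (ha : 0 < a) (l : ℝ) :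
    StrictMono fun x => snCdf l x ^ (1 / a) := fun _ _ hxy =>
  Real.rpow_lt_rpow (snCdf_pos l _).le (strictMono_snCdf l hxy) (by positivity)

lemma range_snCdf_rpow {a : ℝ} (ha : 0 < a) (l : ℝ) :
    range (fun x => snCdf l x ^ (1 / a)) = Ioo 0 1 := by
  have hrpow (u : ℝ) : ContinuousAt (fun u : ℝ => u ^ (1 / a)) u :=
    Real.continuousAt_rpow_const u _ (Or.inr (by positivity))
  refine (strictMono_snCdf_rpow ha l).range_eq_Ioo_of_tendsto
    (continuous_iff_continuousAt.2 fun x => (hasDerivAt_snCdf_rpow a l x).continuousAt) ?_ ?_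
  · have := (hrpow 0).tendsto.comp (tendsto_snCdf_atBot l)
    rwa [Real.zero_rpow (one_div_pos.2 ha).ne'] at this
  · have := (hrpow 1).tendsto.comp (tendsto_snCdf_atTop l)
    rwa [Real.one_rpow] at this

/-- If `X ∼ BSN(l, 1, b)` then `Y = Φ(X; l)^{1/a}` has the Kumaraswamy
distribution with parameters `a` and `b`: its law has density
`y ↦ a b y^{a-1} (1 - y^a)^{b-1}` on `(0, 1)`. -/
theorem bsn_kumaraswamy (l a b : ℝ) (ha : 0 < a) (hb : 0 < b) :
    Measure.map (fun x => snCdf l x ^ (1 / a)) (bsnMeasure l 1 b) =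
      volume.withDensity fun y =>
        ENNReal.ofReal
          (Set.indicator (Set.Ioo (0:ℝ) 1)
            (fun y => a * b * y ^ (a - 1) * (1 - y ^ a) ^ (b - 1)) y) := by
  change _ = volume.withDensity (ENNReal.ofReal ∘ (Ioo 0 1).indicator (kumPdf a b))
  rw [bsnMeasure, ← indicator_comp_of_zero ENNReal.ofReal_zero]
  refine map_withDensity_eq_withDensity_indicator measurableSet_Ioo (range_snCdf_rpow ha l)
    (hasDerivAt_snCdf_rpow a l) (strictMono_snCdf_rpow ha l).injective fun x => ?_
  have := snPdf_pos l x
  have := snCdf_pos l x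
  rw [Function.comp_apply, ← ENNReal.ofReal_mul (abs_nonneg _), abs_of_nonneg (by positivity),
    bsnPdf_one_left_eq_mul_kumPdf ha.ne' hb]
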